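/- (Type C_n, values of ℓ_{ϖ_n}⁻ at fundamental weights.) Let n ≥ 2 and j ∈ {2, …, n}, and set i = ⌊(j+2)/2⌋. Then ℓ_{ϖ_n}⁻(ϖ_j) = (n − j)·i + i(i+1)/2; that is, the least k such that some composition w of k simple reflections of type C_n satisfies ⟨w ϖ_j, ϖ_n⟩ < 0 equals (n − j)·i + i(i+1)/2. -/

import Mathlib

open scoped RealInnerProductSpace

/-- The `j`-th simple reflection of type `Cₙ` (`1 ≤ j ≤ n`), acting on `ℝⁿ`:
for `j < n` it transposes the coordinates numbered `j` and `j+1` (in `1`-based numbering),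
and for `j = n` it negates the last coordinate. -/
noncomputable def sC (n j : ℕ) : EuclideanSpace ℝ (Fin n) → EuclideanSpace ℝ (Fin n) :=
  fun v => WithLp.toLp 2 (fun (i : Fin n) =>
    if j = n then (if (i : ℕ) + 1 = n then -(v i) else v i)
    else if (i : ℕ) + 1 = j then v ⟨j % n, Nat.mod_lt _ i.pos⟩
    else if (i : ℕ) = j then v ⟨(j - 1) % n, Nat.mod_lt _ i.pos⟩
    else v i)

/-- The composition of the simple reflections indexed by the entries of `l`
(the last entry of the list is applied first). -/
noncomputable def compC (n : ℕ) (l : List ℕ) :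
    EuclideanSpace ℝ (Fin n) → EuclideanSpace ℝ (Fin n) :=
  l.foldr (fun j g => sC n j ∘ g) id

/-- The fundamental weight `ϖⱼ = e₁ + ⋯ + eⱼ` of type `Cₙ` (`1 ≤ j ≤ n`). -/
noncomputable def wtC (n j : ℕ) : EuclideanSpace ℝ (Fin n) :=
  WithLp.toLp 2 (fun (i : Fin n) => if (i : ℕ) < j then 1 else 0)

/-!
The orbit of `ϖⱼ` consists of the vectors with `j` entries `±1` and all other entries `0`, and
`⟨v, ϖₙ⟩ < 0` means that at least `m = ⌊(j+2)/2⌋` entries are `-1`. A simple reflection either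
swaps two adjacent entries or negates the last one, so an entry `+1` must travel to the last
position before it can become `-1`. With `N` the number of entries `-1` and `h_c` the number of
entries `+1` strictly to the right of position `c`, the potential `∑_c (m - N - h_c)₊` therefore
drops by at most one per reflection, and it drops by exactly one when the rightmost `+1` moves one
step to the right or, sitting in the last position, is negated. The potential vanishes exactly
when `N ≥ m`, and at `ϖⱼ` it equals `(n - j)·m + m(m+1)/2`.
-/

open Finset

theorem Fintype.sum_add_eq_sum_add_of_forall_ne {ι M : Type*} [Fintype ι] [DecidableEq ι]
    [AddCommMonoid M] {f g : ι → M} (x : ι) (h : ∀ y ≠ x, f y = g y) :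
    ∑ y, f y + g x = ∑ y, g y + f x := by
  have hrest : ∑ y ∈ univ.erase x, f y = ∑ y ∈ univ.erase x, g y :=
    Finset.sum_congr rfl fun y hy => h y (ne_of_mem_erase hy)
  rw [← add_sum_erase _ f (mem_univ x), ← add_sum_erase _ g (mem_univ x), hrest]
  abel

theorem sum_range_sub_eq_of_le {i k : ℕ} (hik : i ≤ k) :
    ∑ c ∈ range k, (i - c) = i * (i + 1) / 2 := by
  induction k, hik using Nat.le_induction with
  | base =>
    have hgauss := sum_range_succ' (fun c => c) i
    rw [sum_range_id, Nat.add_sub_cancel, add_zero, mul_comm] at hgauss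
    rw [← sum_range_reflect, hgauss]
    exact sum_congr rfl fun c hc => by have := mem_range.1 hc; omega
  | succ k _ ih => rw [sum_range_succ, ih, Nat.sub_eq_zero_of_le (by omega), add_zero]

theorem sum_range_sub_sub_eq {i j k : ℕ} (hij : i ≤ j) (hjk : j ≤ k) :
    ∑ c ∈ range k, (i - (j - c - 1)) = (k - j) * i + i * (i + 1) / 2 := by
  induction k, hjk using Nat.le_induction with
  | base =>
    rw [← sum_range_sub_eq_of_le hij, ← sum_range_reflect]
    simp only [Nat.sub_self, zero_mul, zero_add]
    exact sum_congr rfl fun c hc => by have := mem_range.1 hc; congr 1; omega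
  | succ k hjk ih =>
    rw [sum_range_succ, ih, show j - k - 1 = 0 by omega, show k + 1 - j = k - j + 1 by omega,
      Nat.sub_zero, add_mul, one_mul]
    omega

section

variable {n : ℕ}

theorem sC_succ_apply {a : ℕ} (ha : a + 1 < n) (v : EuclideanSpace ℝ (Fin n)) (p : Fin n) :
    sC n (a + 1) v p = v (Equiv.swap ⟨a, by omega⟩ ⟨a + 1, ha⟩ p) := by
  simp only [sC, PiLp.toLp_apply, if_neg ha.ne]
  by_cases hpa : (p : ℕ) = a
  · subst hpa
    simp [Nat.mod_eq_of_lt ha]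
  by_cases hpa' : (p : ℕ) = a + 1
  · obtain rfl : p = ⟨a + 1, ha⟩ := Fin.ext hpa'
    simp [Nat.mod_eq_of_lt (show a < n by omega)]
  rw [Equiv.swap_apply_of_ne_of_ne (by simpa [Fin.ext_iff] using hpa)
    (by simpa [Fin.ext_iff] using hpa'), if_neg (by omega), if_neg hpa']

theorem sC_self_apply (v : EuclideanSpace ℝ (Fin n)) (p : Fin n) :
    sC n n v p = if (p : ℕ) + 1 = n then -v p else v p := by
  simp [sC]

theorem sC_self_sC_self (v : EuclideanSpace ℝ (Fin n)) : sC n n (sC n n v) = v := by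
  ext p
  simp only [sC_self_apply]
  split_ifs <;> simp

theorem sC_self_apply_last {L : Fin n} (hL : (L : ℕ) + 1 = n) (v : EuclideanSpace ℝ (Fin n)) :
    sC n n v L = -v L := by
  rw [sC_self_apply, if_pos hL]

theorem sC_self_apply_of_ne {L : Fin n} (hL : (L : ℕ) + 1 = n) {p : Fin n} (hp : p ≠ L)
    (v : EuclideanSpace ℝ (Fin n)) : sC n n v p = v p := by
  rw [sC_self_apply, if_neg fun h => hp (Fin.ext (by omega))]

theorem sC_self_of_apply_eq_zero {L : Fin n} (hL : (L : ℕ) + 1 = n)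
    {v : EuclideanSpace ℝ (Fin n)} (hv : v L = 0) : sC n n v = v := by
  ext p
  rcases eq_or_ne p L with rfl | hp
  · rw [sC_self_apply_last hL, hv, neg_zero]
  · exact sC_self_apply_of_ne hL hp v

theorem compC_append_singleton (l : List ℕ) (a : ℕ) (v : EuclideanSpace ℝ (Fin n)) :
    compC n (l ++ [a]) v = compC n l (sC n a v) := by
  induction l with
  | nil => rfl
  | cons b l ih => exact congrArg (sC n b) ih

theorem inner_wtC_self (v : EuclideanSpace ℝ (Fin n)) : ⟪v, wtC n n⟫ = ∑ p, v p := by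
  simp [PiLp.inner_apply, wtC]

def IsSignVector (v : EuclideanSpace ℝ (Fin n)) : Prop :=
  ∀ p, v p = -1 ∨ v p = 0 ∨ v p = 1

noncomputable def negCount (v : EuclideanSpace ℝ (Fin n)) : ℕ :=
  #{p | v p = -1}

noncomputable def posCountAbove (v : EuclideanSpace ℝ (Fin n)) (c : ℕ) : ℕ :=
  #{p | v p = 1 ∧ c < (p : ℕ)}

theorem IsSignVector.sC {v : EuclideanSpace ℝ (Fin n)} (hv : IsSignVector v) {a : ℕ}
    (ha : 1 ≤ a) (han : a ≤ n) : IsSignVector (sC n a v) := by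
  intro p
  rcases han.lt_or_eq with han | rfl
  · obtain ⟨a, rfl⟩ := Nat.exists_eq_add_one_of_ne_zero (by omega : a ≠ 0)
    rw [sC_succ_apply han]
    exact hv _
  · rw [sC_self_apply]
    split_ifs
    · rcases hv p with h | h | h <;> simp [h]
    · exact hv p

theorem sum_abs_sC {a : ℕ} (ha : 1 ≤ a) (han : a ≤ n) (v : EuclideanSpace ℝ (Fin n)) :
    ∑ p, |sC n a v p| = ∑ p, |v p| := by
  rcases han.lt_or_eq with han | rfl
  · obtain ⟨a, rfl⟩ := Nat.exists_eq_add_one_of_ne_zero (by omega : a ≠ 0)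
    simp only [sC_succ_apply han]
    exact Equiv.sum_comp _ fun p => |v p|
  · refine sum_congr rfl fun p _ => ?_
    rw [sC_self_apply]
    split_ifs <;> simp

theorem IsSignVector.compC {v : EuclideanSpace ℝ (Fin n)} (hv : IsSignVector v) {l : List ℕ}
    (hl : ∀ a ∈ l, 1 ≤ a ∧ a ≤ n) : IsSignVector (compC n l v) := by
  induction l with
  | nil => exact hv
  | cons a l ih =>
    have ha := hl a List.mem_cons_self
    exact (ih fun b hb => hl b (List.mem_cons_of_mem a hb)).sC ha.1 ha.2

theorem sum_abs_compC {l : List ℕ} (hl : ∀ a ∈ l, 1 ≤ a ∧ a ≤ n)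
    (v : EuclideanSpace ℝ (Fin n)) :
    ∑ p, |compC n l v p| = ∑ p, |v p| := by
  induction l with
  | nil => rfl
  | cons a l ih =>
    have ha := hl a List.mem_cons_self
    exact (sum_abs_sC ha.1 ha.2 _).trans (ih fun b hb => hl b (List.mem_cons_of_mem a hb))

theorem IsSignVector.sum_eq {v : EuclideanSpace ℝ (Fin n)} (hv : IsSignVector v) :
    ∑ p, v p = ∑ p, |v p| - 2 * negCount v := by
  rw [negCount, natCast_card_filter, mul_sum, ← sum_sub_distrib]
  refine sum_congr rfl fun p _ => ?_
  rcases hv p with h | h | h <;> norm_num [h]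

theorem IsSignVector.sum_neg_iff {v : EuclideanSpace ℝ (Fin n)} (hv : IsSignVector v) {j : ℕ}
    (hj : ∑ p, |v p| = j) : ∑ p, v p < 0 ↔ (j + 2) / 2 ≤ negCount v := by
  rw [hv.sum_eq, hj, sub_neg, ← Nat.cast_ofNat, ← Nat.cast_mul, Nat.cast_lt]
  omega

theorem IsSignVector.exists_eq_one {v : EuclideanSpace ℝ (Fin n)} (hv : IsSignVector v)
    (h : (negCount v : ℝ) < ∑ p, |v p|) : ∃ p, v p = 1 := by
  by_contra! hne
  refine h.ne (?_ : _ = _)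
  rw [negCount, natCast_card_filter]
  refine sum_congr rfl fun p _ => ?_
  rcases hv p with h | h | h
  · norm_num [h]
  · norm_num [h]
  · exact absurd h (hne p)

theorem posCountAbove_eq_zero_of_le {c : ℕ} (hc : n ≤ c + 1) (v : EuclideanSpace ℝ (Fin n)) :
    posCountAbove v c = 0 :=
  card_eq_zero.2 <| filter_eq_empty_iff.2 fun p _ hp => by have := p.isLt; omega

theorem posCountAbove_eq_add {a : ℕ} (ha : a + 1 < n) (v : EuclideanSpace ℝ (Fin n)) :
    posCountAbove v a = posCountAbove v (a + 1) + if v ⟨a + 1, ha⟩ = 1 then 1 else 0 := by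
  have key := Fintype.sum_add_eq_sum_add_of_forall_ne
    (f := fun p : Fin n => if v p = 1 ∧ a < (p : ℕ) then 1 else 0)
    (g := fun p : Fin n => if v p = 1 ∧ a + 1 < (p : ℕ) then 1 else 0) ⟨a + 1, ha⟩
    fun p hp => if_congr (and_congr_right fun _ => by
      have : (p : ℕ) ≠ a + 1 := fun h => hp (Fin.ext h)
      omega) rfl rfl
  simp only [lt_self_iff_false, and_false, if_false, lt_add_iff_pos_right, zero_lt_one, and_true,
    add_zero] at key
  simpa only [posCountAbove, card_filter] using key

theorem negCount_sC_succ {a : ℕ} (ha : a + 1 < n) (v : EuclideanSpace ℝ (Fin n)) :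
    negCount (sC n (a + 1) v) = negCount v := by
  simp only [negCount, card_filter, sC_succ_apply ha]
  exact Equiv.sum_comp _ fun p => if v p = -1 then 1 else 0

theorem posCountAbove_sC_succ {a c : ℕ} (ha : a + 1 < n) (hc : c ≠ a)
    (v : EuclideanSpace ℝ (Fin n)) : posCountAbove (sC n (a + 1) v) c = posCountAbove v c := by
  set σ := Equiv.swap (⟨a, by omega⟩ : Fin n) ⟨a + 1, ha⟩
  have hσ : ∀ p, c < (σ p : ℕ) ↔ c < (p : ℕ) := by
    intro p
    rcases eq_or_ne p ⟨a, by omega⟩ with rfl | hp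
    · simp [σ]; omega
    rcases eq_or_ne p ⟨a + 1, ha⟩ with rfl | hp'
    · simp [σ]; omega
    rw [Equiv.swap_apply_of_ne_of_ne hp hp']
  simp only [posCountAbove, card_filter, sC_succ_apply ha]
  rw [← Equiv.sum_comp σ fun p => if v p = 1 ∧ c < (p : ℕ) then 1 else 0]
  exact sum_congr rfl fun p _ => if_congr (and_congr_right' (hσ p).symm) rfl rfl

theorem posCountAbove_sC_succ_self {a : ℕ} (ha : a + 1 < n) (v : EuclideanSpace ℝ (Fin n)) :
    posCountAbove (sC n (a + 1) v) a =
      posCountAbove v (a + 1) + if v ⟨a, by omega⟩ = 1 then 1 else 0 := by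
  rw [posCountAbove_eq_add ha, posCountAbove_sC_succ ha (by omega), sC_succ_apply ha,
    Equiv.swap_apply_right]

theorem negCount_sC_self {L : Fin n} (hL : (L : ℕ) + 1 = n) {v : EuclideanSpace ℝ (Fin n)}
    (hv : v L = 1) : negCount (sC n n v) = negCount v + 1 := by
  have key := Fintype.sum_add_eq_sum_add_of_forall_ne
    (f := fun p : Fin n => if sC n n v p = -1 then 1 else 0)
    (g := fun p : Fin n => if v p = -1 then 1 else 0) L
    fun p hp => by rw [sC_self_apply_of_ne hL hp]
  norm_num [sC_self_apply_last hL, hv] at key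
  simpa only [negCount, card_filter] using key

theorem posCountAbove_sC_self {L : Fin n} (hL : (L : ℕ) + 1 = n) {v : EuclideanSpace ℝ (Fin n)}
    (hv : v L = 1) {c : ℕ} (hc : c < L) : posCountAbove (sC n n v) c + 1 = posCountAbove v c := by
  have key := Fintype.sum_add_eq_sum_add_of_forall_ne
    (f := fun p : Fin n => if sC n n v p = 1 ∧ c < (p : ℕ) then 1 else 0)
    (g := fun p : Fin n => if v p = 1 ∧ c < (p : ℕ) then 1 else 0) L
    fun p hp => by rw [sC_self_apply_of_ne hL hp]
  norm_num [sC_self_apply_last hL, hv, hc] at key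
  simpa only [posCountAbove, card_filter] using key

noncomputable def flipPotential (m : ℕ) (v : EuclideanSpace ℝ (Fin n)) : ℕ :=
  ∑ c : Fin n, (m - negCount v - posCountAbove v c)

theorem flipPotential_eq_zero {m : ℕ} {v : EuclideanSpace ℝ (Fin n)} (h : m ≤ negCount v) :
    flipPotential m v = 0 :=
  sum_eq_zero fun _ _ => by omega

theorem flipPotential_sC_succ_add (m : ℕ) {a : ℕ} (ha : a + 1 < n)
    (v : EuclideanSpace ℝ (Fin n)) :
    flipPotential m v + (m - negCount v - posCountAbove (sC n (a + 1) v) a) =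
      flipPotential m (sC n (a + 1) v) + (m - negCount v - posCountAbove v a) := by
  have key := Fintype.sum_add_eq_sum_add_of_forall_ne
    (f := fun c : Fin n => m - negCount v - posCountAbove v c)
    (g := fun c : Fin n => m - negCount (sC n (a + 1) v) - posCountAbove (sC n (a + 1) v) c)
    ⟨a, by omega⟩ fun c hc => by
      rw [negCount_sC_succ ha, posCountAbove_sC_succ ha fun h => hc (Fin.ext h)]
  simp only [flipPotential, negCount_sC_succ ha] at key ⊢
  exact key

theorem flipPotential_sC_self (m : ℕ) {L : Fin n} (hL : (L : ℕ) + 1 = n)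
    {v : EuclideanSpace ℝ (Fin n)} (hv : v L = 1) :
    flipPotential m v = flipPotential m (sC n n v) + if negCount v < m then 1 else 0 := by
  have key := Fintype.sum_add_eq_sum_add_of_forall_ne
    (f := fun c : Fin n => m - negCount v - posCountAbove v c)
    (g := fun c : Fin n => m - negCount (sC n n v) - posCountAbove (sC n n v) c) L
    fun c hc => by
      have hcL : (c : ℕ) < L := by
        have : (c : ℕ) ≠ L := fun h => hc (Fin.ext h)
        omega
      rw [negCount_sC_self hL hv, ← posCountAbove_sC_self hL hv hcL]
      omega
  unfold flipPotential
  simp only [posCountAbove_eq_zero_of_le hL.ge, negCount_sC_self hL hv] at key ⊢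
  split_ifs <;> omega

theorem flipPotential_le_sC_add_one (m : ℕ) {v : EuclideanSpace ℝ (Fin n)} (hv : IsSignVector v)
    {a : ℕ} (ha : 1 ≤ a) (han : a ≤ n) :
    flipPotential m v ≤ flipPotential m (sC n a v) + 1 := by
  rcases han.lt_or_eq with han | rfl
  · obtain ⟨a, rfl⟩ := Nat.exists_eq_add_one_of_ne_zero (by omega : a ≠ 0)
    have hpot := flipPotential_sC_succ_add m han v
    have hw := posCountAbove_sC_succ_self han v
    have hsplit := posCountAbove_eq_add han v
    split_ifs at hw hsplit <;> omega
  · have hL : ((⟨a - 1, by omega⟩ : Fin a) : ℕ) + 1 = a := by simp only; omega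
    rcases hv ⟨a - 1, by omega⟩ with h | h | h
    · have h' : sC a a v ⟨a - 1, by omega⟩ = 1 := by rw [sC_self_apply_last hL, h, neg_neg]
      have := flipPotential_sC_self m hL h'
      rw [sC_self_sC_self] at this
      split_ifs at this <;> omega
    · rw [sC_self_of_apply_eq_zero hL h]
      omega
    · have := flipPotential_sC_self m hL h
      split_ifs at this <;> omega

theorem exists_flipPotential_eq_sC_add_one {m : ℕ} {v : EuclideanSpace ℝ (Fin n)}
    (hone : ∃ p, v p = 1) (hN : negCount v < m) :
    ∃ a, 1 ≤ a ∧ a ≤ n ∧ flipPotential m v = flipPotential m (sC n a v) + 1 := by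
  obtain ⟨p₁, hp₁⟩ := hone
  obtain ⟨q, hq, hqmax⟩ := exists_max_image {p | v p = 1} id ⟨p₁, by simp [hp₁]⟩
  rw [mem_filter] at hq
  have htop : posCountAbove v q = 0 :=
    card_eq_zero.2 <| filter_eq_empty_iff.2 fun p _ hp =>
      Nat.not_lt.2 (hqmax p (mem_filter.2 ⟨mem_univ p, hp.1⟩)) hp.2
  by_cases hqn : (q : ℕ) + 1 < n
  · refine ⟨q + 1, by omega, hqn.le, ?_⟩
    have hpot := flipPotential_sC_succ_add m hqn v
    have hw := posCountAbove_sC_succ_self hqn v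
    have hsplit := posCountAbove_eq_add hqn v
    simp only [Fin.eta, hq.2, if_true] at hw
    split_ifs at hsplit <;> omega
  · refine ⟨n, by omega, le_rfl, ?_⟩
    rw [flipPotential_sC_self m (by omega) hq.2, if_pos hN]

theorem flipPotential_le_compC_add_length (m : ℕ) {v : EuclideanSpace ℝ (Fin n)}
    (hv : IsSignVector v) {l : List ℕ} (hl : ∀ a ∈ l, 1 ≤ a ∧ a ≤ n) :
    flipPotential m v ≤ flipPotential m (compC n l v) + l.length := by
  induction l with
  | nil => exact le_rfl
  | cons a l ih =>
    have hl' : ∀ b ∈ l, 1 ≤ b ∧ b ≤ n := fun b hb => hl b (List.mem_cons_of_mem a hb)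
    have ha := hl a List.mem_cons_self
    have hstep := flipPotential_le_sC_add_one m (hv.compC hl') ha.1 ha.2
    have := ih hl'
    change _ ≤ flipPotential m (sC n a (compC n l v)) + (l.length + 1)
    omega

theorem exists_list_length_eq_flipPotential {m : ℕ} {v : EuclideanSpace ℝ (Fin n)}
    (hv : IsSignVector v) (hm : (m : ℝ) ≤ ∑ p, |v p|) :
    ∃ l : List ℕ, (∀ a ∈ l, 1 ≤ a ∧ a ≤ n) ∧ l.length = flipPotential m v ∧
      m ≤ negCount (compC n l v) := by
  by_cases hN : m ≤ negCount v
  · exact ⟨[], by simp, (flipPotential_eq_zero hN).symm, hN⟩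
  have hone := hv.exists_eq_one ((Nat.cast_lt.2 (not_le.1 hN)).trans_le hm)
  obtain ⟨a, ha, han, hpot⟩ := exists_flipPotential_eq_sC_add_one hone (not_le.1 hN)
  obtain ⟨l, hl, hlen, hlN⟩ :=
    exists_list_length_eq_flipPotential (hv.sC ha han) (by rwa [sum_abs_sC ha han])
  refine ⟨l ++ [a], fun b hb => ?_, by simp [hlen, hpot], by rwa [compC_append_singleton]⟩
  rcases List.mem_append.1 hb with hb | hb
  · exact hl b hb
  · rw [List.mem_singleton.1 hb]
    exact ⟨ha, han⟩
termination_by flipPotential m v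
decreasing_by omega

theorem isSignVector_wtC (j : ℕ) : IsSignVector (wtC n j) := fun p => by
  by_cases h : (p : ℕ) < j <;> simp [wtC, h]

theorem sum_abs_wtC {j : ℕ} (hjn : j ≤ n) : ∑ p, |wtC n j p| = j := by
  simp only [wtC, PiLp.toLp_apply, apply_ite abs, abs_one, abs_zero, sum_boole,
    Fin.card_filter_val_lt, min_eq_right hjn]

theorem negCount_wtC (j : ℕ) : negCount (wtC n j) = 0 :=
  card_eq_zero.2 <| filter_eq_empty_iff.2 fun p _ => by
    by_cases h : (p : ℕ) < j <;> norm_num [wtC, h]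

theorem posCountAbove_wtC {j : ℕ} (hjn : j ≤ n) (c : ℕ) :
    posCountAbove (wtC n j) c = j - c - 1 := by
  rw [← Nat.card_Ioo, posCountAbove, ← card_map Fin.valEmbedding]
  congr 1
  ext x
  simp only [wtC, PiLp.toLp_apply, mem_map, mem_filter, mem_univ, true_and,
    Fin.valEmbedding_apply, mem_Ioo, ite_eq_left_iff, zero_ne_one, imp_false, not_not]
  constructor
  · rintro ⟨p, ⟨hpj, hcp⟩, rfl⟩
    exact ⟨hcp, hpj⟩
  · rintro ⟨hcx, hxj⟩
    exact ⟨⟨x, by omega⟩, ⟨hxj, hcx⟩, rfl⟩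

theorem flipPotential_wtC {m j : ℕ} (hmj : m ≤ j) (hjn : j ≤ n) :
    flipPotential m (wtC n j) = (n - j) * m + m * (m + 1) / 2 := by
  simp only [flipPotential, negCount_wtC, Nat.sub_zero, posCountAbove_wtC hjn]
  rw [Fin.sum_univ_eq_sum_range (fun c => m - (j - c - 1)), sum_range_sub_sub_eq hmj hjn]

end

theorem statement12_general (n j : ℕ) (hj2 : 2 ≤ j) (hjn : j ≤ n) :
    IsLeast {k : ℕ | ∃ l : List ℕ, (∀ m ∈ l, 1 ≤ m ∧ m ≤ n) ∧ l.length = k ∧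
        ⟪compC n l (wtC n j), wtC n n⟫ < 0}
      ((n - j) * ((j + 2) / 2) + ((j + 2) / 2) * ((j + 2) / 2 + 1) / 2) := by
  have hmj : (j + 2) / 2 ≤ j := by omega
  have hsign : IsSignVector (wtC n j) := isSignVector_wtC j
  have hneg {l : List ℕ} (hl : ∀ a ∈ l, 1 ≤ a ∧ a ≤ n) :
      ⟪compC n l (wtC n j), wtC n n⟫ < 0 ↔
        (j + 2) / 2 ≤ negCount (compC n l (wtC n j)) := by
    rw [inner_wtC_self]
    exact (hsign.compC hl).sum_neg_iff (by rw [sum_abs_compC hl, sum_abs_wtC hjn])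
  rw [← flipPotential_wtC hmj hjn]
  constructor
  · obtain ⟨l, hl, hlen, hN⟩ := exists_list_length_eq_flipPotential (m := (j + 2) / 2) hsign
      (by rw [sum_abs_wtC hjn]; exact_mod_cast hmj)
    exact ⟨l, hl, hlen, (hneg hl).2 hN⟩
  · rintro k ⟨l, hl, rfl, hk⟩
    have := flipPotential_le_compC_add_length ((j + 2) / 2) hsign hl
    rwa [flipPotential_eq_zero ((hneg hl).1 hk), zero_add] at this

theorem statement12 (n j : ℕ) (hn : 2 ≤ n) (hj2 : 2 ≤ j) (hjn : j ≤ n) :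
    IsLeast {k : ℕ | ∃ l : List ℕ, (∀ m ∈ l, 1 ≤ m ∧ m ≤ n) ∧ l.length = k ∧
        ⟪compC n l (wtC n j), wtC n n⟫ < 0}
      ((n - j) * ((j + 2) / 2) + ((j + 2) / 2) * ((j + 2) / 2 + 1) / 2) :=
  statement12_general n j hj2 hjn
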